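/- Let (x_1, …, x_n) be a basis of the lattice ℤ^n and let u be a unit vector of ℝ^n perpendicular to V := span(x_1, …, x_{n−1}). Then H(V) = |x_n·u|⁻¹, where H(V) = ‖x_1 ∧ ⋯ ∧ x_{n−1}‖ is the height of V. -/

import Mathlib

open scoped RealInnerProductSpace
open Finset

noncomputable section

/-- A vector of `ℝⁿ` has integer coordinates. -/
def IsIntVec {n : ℕ} (x : EuclideanSpace ℝ (Fin n)) : Prop := ∀ j, ∃ m : ℤ, x j = m

/-- The norm `‖v₁ ∧ ⋯ ∧ v_m‖` of a wedge product, computed as the square root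
of the Gram determinant. -/
def gramNorm {n : ℕ} {ι : Type*} [Fintype ι] [DecidableEq ι]
    (v : ι → EuclideanSpace ℝ (Fin n)) : ℝ :=
  Real.sqrt (Matrix.det (Matrix.of fun i j => (⟪v i, v j⟫ : ℝ)))

/-- Let `(x₁,…,x_n)` be a basis of `ℤⁿ` (integer vectors with
`|det| = 1`) and let `u` be a unit vector orthogonal to
`V = span(x₁,…,x_{n−1})`.  Then `H(V) = ‖x₁ ∧ ⋯ ∧ x_{n−1}‖ = |x_n·u|⁻¹`.
(Here `n = m + 1`.) -/
theorem stmt5 (m : ℕ)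
    (x : Fin (m + 1) → EuclideanSpace ℝ (Fin (m + 1)))
    (hint : ∀ i, IsIntVec (x i))
    (hbasis : |Matrix.det (Matrix.of fun i j => x i j)| = 1)
    (u : EuclideanSpace ℝ (Fin (m + 1))) (hu : ‖u‖ = 1)
    (hperp : ∀ i : Fin m, ⟪x i.castSucc, u⟫ = 0) :
    gramNorm (fun i : Fin m => x i.castSucc) = |⟪x (Fin.last m), u⟫|⁻¹ := by
  classical
  have hinner : ∀ v w : EuclideanSpace ℝ (Fin (m+1)), (⟪v,w⟫ : ℝ) = ∑ k, v k * w k := by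
    intro v w; simp [PiLp.inner_apply, RCLike.inner_apply]
    exact Finset.sum_congr rfl fun k _ => mul_comm _ _
  set c : ℝ := ⟪x (Fin.last m), u⟫ with hc
  set A : Matrix (Fin (m+1)) (Fin (m+1)) ℝ := Matrix.of fun i j => x i j with hAdef
  set B : Matrix (Fin (m+1)) (Fin (m+1)) ℝ :=
    Matrix.of (fun i j => if i = Fin.last m then u j else x i j) with hBdef
  set G : Matrix (Fin m) (Fin m) ℝ :=
    Matrix.of (fun i j => (⟪x i.castSucc, x j.castSucc⟫ : ℝ)) with hGdef
  have hdetA : |A.det| = 1 := hbasis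
  have hA0 : A.det ≠ 0 := by
    intro h; rw [h] at hdetA; simp at hdetA
  set e : Fin m ⊕ Fin 1 ≃ Fin (m+1) := finSumFinEquiv with hedef
  have he1 : ∀ i : Fin m, e (Sum.inl i) = i.castSucc := by
    intro i; simp [hedef, finSumFinEquiv, Fin.castSucc]
  have he2 : ∀ j : Fin 1, e (Sum.inr j) = Fin.last m := by
    intro j; fin_cases j
    simp [hedef, finSumFinEquiv]
    rfl
  have hne : ∀ i : Fin m, i.castSucc ≠ Fin.last m := fun i => (Fin.castSucc_lt_last i).ne
  have huu : (⟪u, u⟫ : ℝ) = 1 := by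
    rw [real_inner_self_eq_norm_sq, hu]; norm_num
  have key : ∀ (M N : Matrix (Fin (m+1)) (Fin (m+1)) ℝ) (p q : Fin (m+1))
      (v w : EuclideanSpace ℝ (Fin (m+1))),
      (∀ k, M p k = v k) → (∀ k, N q k = w k) → (M * N.transpose) p q = ⟪v, w⟫ := by
    intro M N p q v w hv hw
    rw [Matrix.mul_apply, hinner]
    exact Finset.sum_congr rfl fun k _ => by rw [Matrix.transpose_apply, hv, hw]
  have hArow : ∀ (p : Fin (m+1)) (k), A p k = x p k := fun p k => rfl
  have hBlast : ∀ k, B (Fin.last m) k = u k := fun k => if_pos rfl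
  have hBcast : ∀ (i : Fin m) (k), B i.castSucc k = x i.castSucc k :=
    fun i k => if_neg (hne i)
  -- block structure of A * Bᵀ
  have hAB : (A * B.transpose).submatrix e e =
      Matrix.fromBlocks G 0
        (Matrix.of fun (_ : Fin 1) j => (⟪x (Fin.last m), x j.castSucc⟫ : ℝ))
        (Matrix.of fun _ _ => c) := by
    ext i j
    cases i with
    | inl i =>
      cases j with
      | inl j =>
        rw [Matrix.submatrix_apply, he1, he1, Matrix.fromBlocks_apply₁₁,
          key A B _ _ (x i.castSucc) (x j.castSucc) (hArow _) (hBcast j)]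
        rfl
      | inr j =>
        rw [Matrix.submatrix_apply, he1, he2, Matrix.fromBlocks_apply₁₂,
          key A B _ _ (x i.castSucc) u (hArow _) hBlast, Matrix.zero_apply]
        exact hperp i
    | inr i =>
      cases j with
      | inl j =>
        rw [Matrix.submatrix_apply, he1, he2, Matrix.fromBlocks_apply₂₁,
          key A B _ _ (x (Fin.last m)) (x j.castSucc) (hArow _) (hBcast j)]
        rfl
      | inr j =>
        rw [Matrix.submatrix_apply, he2, he2, Matrix.fromBlocks_apply₂₂,
          key A B _ _ (x (Fin.last m)) u (hArow _) hBlast]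
        rfl
  have hABdet : A.det * B.det = G.det * c := by
    have h1 := Matrix.det_submatrix_equiv_self e (A * B.transpose)
    rw [hAB, Matrix.det_fromBlocks_zero₁₂, Matrix.det_mul, Matrix.det_transpose] at h1
    rw [← h1, Matrix.det_fin_one]
    rfl
  -- block structure of B * Bᵀ
  have hBB : (B * B.transpose).submatrix e e =
      Matrix.fromBlocks G 0 0 (Matrix.of fun _ _ => (1:ℝ)) := by
    ext i j
    cases i with
    | inl i =>
      cases j with
      | inl j =>
        rw [Matrix.submatrix_apply, he1, he1, Matrix.fromBlocks_apply₁₁,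
          key B B _ _ (x i.castSucc) (x j.castSucc) (hBcast i) (hBcast j)]
        rfl
      | inr j =>
        rw [Matrix.submatrix_apply, he1, he2, Matrix.fromBlocks_apply₁₂,
          key B B _ _ (x i.castSucc) u (hBcast i) hBlast, Matrix.zero_apply]
        exact hperp i
    | inr i =>
      cases j with
      | inl j =>
        rw [Matrix.submatrix_apply, he1, he2, Matrix.fromBlocks_apply₂₁,
          key B B _ _ u (x j.castSucc) hBlast (hBcast j), Matrix.zero_apply,
          real_inner_comm]
        exact hperp j
      | inr j =>
        rw [Matrix.submatrix_apply, he2, he2, Matrix.fromBlocks_apply₂₂,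
          key B B _ _ u u hBlast hBlast, huu]
        rfl
  have hBBdet : B.det * B.det = G.det := by
    have h1 := Matrix.det_submatrix_equiv_self e (B * B.transpose)
    rw [hBB, Matrix.det_fromBlocks_zero₁₂, Matrix.det_mul, Matrix.det_transpose] at h1
    rw [← h1, Matrix.det_fin_one]
    simp
  set u' : Fin (m+1) → ℝ := fun k => u k with hu'def
  have hu'0 : u' ≠ 0 := by
    intro h
    have : u = 0 := by
      ext k
      exact congrFun h k
    rw [this] at hu; simp at hu
  have hBu : B.mulVec u' = fun i => if i = Fin.last m then 1 else 0 := by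
    funext i
    by_cases hi : i = Fin.last m
    · subst hi
      rw [if_pos rfl]
      have : B.mulVec u' (Fin.last m) = ∑ k, u k * u k := by
        simp only [Matrix.mulVec, dotProduct]
        exact Finset.sum_congr rfl fun k _ => congrArg (· * u k) (hBlast k)
      rw [this, ← hinner, huu]
    · rw [if_neg hi]
      obtain ⟨i', rfl⟩ : ∃ i' : Fin m, i'.castSucc = i :=
        ⟨i.castPred hi, Fin.castSucc_castPred i hi⟩
      have : B.mulVec u' i'.castSucc = ∑ k, x i'.castSucc k * u k := by
        simp only [Matrix.mulVec, dotProduct]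
        exact Finset.sum_congr rfl fun k _ => congrArg (· * u k) (hBcast i' k)
      rw [this, ← hinner]
      exact hperp i'
  -- c ≠ 0
  have hc0 : c ≠ 0 := by
    intro h
    have hmv : A.mulVec u' = 0 := by
      funext i
      have : A.mulVec u' i = ∑ k, x i k * u k := rfl
      rw [this, ← hinner]
      induction i using Fin.lastCases with
      | last => exact h
      | cast i => exact hperp i
    exact hA0 (Matrix.exists_mulVec_eq_zero_iff.mp ⟨u', hu'0, hmv⟩)
  -- B.det ≠ 0
  have hB0 : B.det ≠ 0 := by
    intro h
    have hBt : B.transpose.det = 0 := by rw [Matrix.det_transpose]; exact h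
    obtain ⟨v, hv0, hv⟩ := Matrix.exists_mulVec_eq_zero_iff.mpr hBt
    have hvlast : v (Fin.last m) = 0 := by
      have h1 : dotProduct u' (B.transpose.mulVec v) = 0 := by rw [hv]; simp
      rw [Matrix.dotProduct_mulVec, Matrix.vecMul_transpose, hBu] at h1
      simpa [dotProduct] using h1
    have hmv : A.transpose.mulVec v = 0 := by
      funext k
      have h2 := congrFun hv k
      simp only [Matrix.mulVec, dotProduct, Matrix.transpose_apply,
        Pi.zero_apply] at h2 ⊢
      rw [← h2]
      apply Finset.sum_congr rfl
      intro j _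
      by_cases hj : j = Fin.last m
      · subst hj; rw [hvlast]; ring
      · simp [hAdef, hBdef, hj]
    have : A.transpose.det = 0 := Matrix.exists_mulVec_eq_zero_iff.mp ⟨v, hv0, hmv⟩
    rw [Matrix.det_transpose] at this
    exact hA0 this
  -- conclude
  have hAeq : A.det = B.det * c := by
    have h1 : A.det * B.det = (B.det * c) * B.det := by
      rw [hABdet, ← hBBdet]; ring
    exact mul_right_cancel₀ hB0 h1
  have hGval : G.det = (c ^ 2)⁻¹ := by
    have h2 : A.det ^ 2 = 1 := by
      rw [← sq_abs, hdetA]; norm_num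
    have h3 : B.det ^ 2 * c ^ 2 = 1 := by
      rw [← h2, hAeq]; ring
    have h4 : B.det ^ 2 = (c ^ 2)⁻¹ := by
      field_simp at h3 ⊢
      linarith
    rw [← hBBdet, ← sq, h4]
  show Real.sqrt G.det = |c|⁻¹
  rw [hGval, Real.sqrt_inv, Real.sqrt_sq_eq_abs]
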